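/- Let α_n = ∑_{j=0}^{n-1} r_j² − log(n)/π with r_j = C(2j,j)/4^j (r_0 = 1), and let α_∞ = lim α_n. Then for every n ≥ 1, 0 ≤ α_∞ − α_n ≤ 1/(5n). -/

import Mathlib

open Real Filter

noncomputable def r (n : ℕ) : ℝ := (Nat.choose (2 * n) n : ℝ) / 4 ^ n

noncomputable def α (n : ℕ) : ℝ := (∑ j ∈ Finset.range n, (r j) ^ 2) - Real.log n / π

/-!
Since `r k ^ 2 = 1 / ((2k+1) W k)` for the Wallis product `W`, the lower Wallis bound and the
decreasing limit `(3k+1) r k ^ 2 ↓ 3/π` squeeze `π r k ^ 2` between `3/(3k+1)` and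
`(4k+4)/(2k+1)²`. The series of `log (1 + 1/k)` in odd powers of `1/(2k+1)` puts
`log (k+1) - log k` between `2/(2k+1)` and `(2k+1)/(2k(k+1)) ≤ 3/(3k+1)`. So for `k ≥ 1` the
increment `α (k+1) - α k = r k ^ 2 - (log (k+1) - log k)/π` lies in `[0, (1/k - 1/(k+1))/(2π)]`:
`α N` increases and `α N + 1/(2πN)` decreases, whence `α n ≤ α∞ ≤ α n + 1/(2πn)`, and `2π > 5`.
-/

open Topology Set Real.Wallis

namespace Real

theorem two_div_two_mul_add_one_le_log_one_add_inv {a : ℝ} (ha : 0 < a) :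
    2 / (2 * a + 1) ≤ log (1 + a⁻¹) := by
  refine le_trans (le_of_eq ?_) (le_hasSum (hasSum_log_one_add_inv ha) 0 fun k _ => by positivity)
  norm_num [div_eq_mul_inv]

theorem log_one_add_inv_le {a : ℝ} (ha : 0 < a) :
    log (1 + a⁻¹) ≤ (2 * a + 1) / (2 * a * (a + 1)) := by
  set t := 1 / (2 * a + 1) with ht
  have ht0 : 0 ≤ t := by positivity
  have ht1 : t ^ 2 < 1 := by
    rw [sq_lt_one_iff₀ ht0, ht, div_lt_one (by positivity)]
    linarith
  -- Compare termwise with the geometric series `∑ 2 t ^ (2k+1) = 2t / (1 - t²)`.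
  have hgeom : HasSum (fun k : ℕ => 2 * t ^ (2 * k + 1)) (2 * t * (1 - t ^ 2)⁻¹) :=
    ((hasSum_geometric_of_lt_one (sq_nonneg t) ht1).mul_left (2 * t)).congr_fun fun k => by ring
  refine (hasSum_le (fun k => ?_) (hasSum_log_one_add_inv ha) hgeom).trans_eq ?_
  · have hk : 1 / (2 * (k : ℝ) + 1) ≤ 1 := by
      rw [div_le_one (by positivity)]
      linarith [k.cast_nonneg (α := ℝ)]
    have : 0 ≤ t ^ (2 * k + 1) := by positivity
    nlinarith
  · have h : 1 - t ^ 2 = 4 * a * (a + 1) / (2 * a + 1) ^ 2 := by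
      rw [ht]
      field_simp
      ring
    rw [h, ht]
    field_simp
    ring

end Real

lemma r_succ (n : ℕ) : r (n + 1) = r n * ((2 * n + 1) / (2 * n + 2)) := by
  have h : ((n : ℝ) + 1) * ((2 * (n + 1)).choose (n + 1) : ℕ)
      = 2 * (2 * n + 1) * ((2 * n).choose n : ℕ) := by
    exact_mod_cast Nat.succ_mul_centralBinom_succ n
  unfold r
  rw [pow_succ]
  field_simp
  linear_combination 2 * h

lemma two_mul_add_one_mul_r_sq_mul_W (n : ℕ) : (2 * n + 1) * r n ^ 2 * W n = 1 := by
  induction n with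
  | zero => simp [r, W]
  | succ n ih =>
    refine Eq.trans ?_ ih
    rw [r_succ, W_succ]
    push_cast
    field_simp
    ring

lemma r_sq_eq (n : ℕ) : r n ^ 2 = 1 / ((2 * n + 1) * W n) := by
  have := W_pos n
  rw [eq_div_iff (by positivity)]
  linear_combination two_mul_add_one_mul_r_sq_mul_W n

lemma pi_mul_r_sq_le (n : ℕ) : π * r n ^ 2 ≤ (4 * n + 4) / (2 * n + 1) ^ 2 := by
  have hW := le_W n
  have := W_pos n
  rw [div_mul_eq_mul_div, div_le_iff₀ (by positivity)] at hW
  rw [r_sq_eq, mul_one_div, div_le_div_iff₀ (by positivity) (by positivity)]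
  nlinarith [pi_pos]

lemma tendsto_three_mul_add_one_mul_r_sq :
    Tendsto (fun k : ℕ => (3 * k + 1) * r k ^ 2) atTop (𝓝 (3 / π)) := by
  have h2k : Tendsto (fun k : ℕ => (2 * k + 1 : ℝ)) atTop atTop :=
    tendsto_atTop_add_const_right _ _ (tendsto_natCast_atTop_atTop.const_mul_atTop two_pos)
  have hfrac := (h2k.inv_tendsto_atTop.div_const 2).const_sub (3 / 2 : ℝ)
  rw [zero_div, sub_zero] at hfrac
  have hlim := hfrac.div tendsto_W_nhds_pi_div_two (by positivity)
  rw [show (3 / 2 : ℝ) / (π / 2) = 3 / π by field_simp] at hlim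
  refine hlim.congr fun k => ?_
  have := W_pos k
  simp only [Pi.div_apply, Pi.inv_apply, r_sq_eq]
  field_simp
  ring

lemma antitone_three_mul_add_one_mul_r_sq : Antitone fun k : ℕ => (3 * k + 1) * r k ^ 2 := by
  refine antitone_nat_of_succ_le fun k => ?_
  simp only [r_succ, Nat.cast_succ]
  rw [mul_pow, div_pow, ← sub_nonneg]
  have : (3 * k + 1 : ℝ) * r k ^ 2 - (3 * (k + 1) + 1) * (r k ^ 2 * ((2 * k + 1) ^ 2 / (2 * k + 2) ^ 2))
      = k * r k ^ 2 / (2 * k + 2) ^ 2 := by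
    field_simp
    ring
  rw [this]
  positivity

lemma three_div_le_pi_mul_r_sq (k : ℕ) : 3 / (3 * k + 1) ≤ π * r k ^ 2 := by
  have h := antitone_three_mul_add_one_mul_r_sq.le_of_tendsto tendsto_three_mul_add_one_mul_r_sq k
  rw [div_le_iff₀ pi_pos] at h
  rw [div_le_iff₀ (by positivity)]
  linarith

lemma log_succ_sub_log {k : ℕ} (hk : 0 < k) : log (k + 1) - log k = log (1 + (k : ℝ)⁻¹) := by
  have hk' : (0 : ℝ) < k := by exact_mod_cast hk
  rw [← log_div (by positivity) hk'.ne', add_div, div_self hk'.ne', one_div]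

lemma log_succ_sub_log_le_pi_mul_r_sq {k : ℕ} (hk : 0 < k) :
    log (k + 1) - log k ≤ π * r k ^ 2 := by
  have hk' : (1 : ℝ) ≤ k := by exact_mod_cast hk
  have hrat : (2 * k + 1 : ℝ) / (2 * k * (k + 1)) ≤ 3 / (3 * k + 1) := by
    rw [div_le_div_iff₀ (by positivity) (by positivity)]
    nlinarith
  rw [log_succ_sub_log hk]
  linarith [log_one_add_inv_le (by positivity : (0 : ℝ) < k), three_div_le_pi_mul_r_sq k]

lemma pi_mul_r_sq_sub_le {k : ℕ} (hk : 0 < k) :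
    π * r k ^ 2 - (log (k + 1) - log k) ≤ (1 / k - 1 / (k + 1)) / 2 := by
  have hk' : (0 : ℝ) < k := by exact_mod_cast hk
  have hrat : (4 * k + 4 : ℝ) / (2 * k + 1) ^ 2 - 2 / (2 * k + 1) ≤ (1 / k - 1 / (k + 1)) / 2 := by
    have e1 : (4 * k + 4 : ℝ) / (2 * k + 1) ^ 2 - 2 / (2 * k + 1) = 2 / (2 * k + 1) ^ 2 := by
      field_simp
      ring
    have e2 : (1 / k - 1 / (k + 1) : ℝ) / 2 = 1 / (2 * k * (k + 1)) := by
      field_simp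
      ring
    rw [e1, e2, div_le_div_iff₀ (by positivity) (by positivity)]
    nlinarith
  rw [log_succ_sub_log hk]
  linarith [two_div_two_mul_add_one_le_log_one_add_inv hk', pi_mul_r_sq_le k]

lemma alpha_succ_sub_alpha (k : ℕ) : α (k + 1) - α k = r k ^ 2 - (log (k + 1) - log k) / π := by
  simp only [α, Finset.sum_range_succ, Nat.cast_succ]
  ring

lemma monotoneOn_alpha : MonotoneOn α (Ici 1) := by
  refine monotoneOn_nat_Ici_of_le_succ fun k hk => ?_
  rw [← sub_nonneg, alpha_succ_sub_alpha, sub_nonneg, div_le_iff₀ pi_pos, mul_comm]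
  exact log_succ_sub_log_le_pi_mul_r_sq hk

lemma antitoneOn_alpha_add : AntitoneOn (fun N : ℕ => α N + 1 / (2 * π * N)) (Ici 1) := by
  refine antitoneOn_nat_Ici_of_succ_le fun k hk => ?_
  have hk' : (0 : ℝ) < k := by exact_mod_cast hk
  have hstep : r k ^ 2 - (log (k + 1) - log k) / π ≤ 1 / (2 * π * k) - 1 / (2 * π * (k + 1)) := by
    have e : 1 / (2 * π * k) - 1 / (2 * π * (k + 1)) = (1 / k - 1 / (k + 1)) / 2 / π := by
      field_simp
    rw [e, le_div_iff₀ pi_pos, sub_mul, div_mul_cancel₀ _ pi_pos.ne']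
    linarith [pi_mul_r_sq_sub_le hk]
  push_cast
  linarith [alpha_succ_sub_alpha k]

theorem alpha_rate (αinf : ℝ) (h : Tendsto α atTop (nhds αinf)) (n : ℕ) (hn : 1 ≤ n) :
    0 ≤ αinf - α n ∧ αinf - α n ≤ 1 / (5 * n) := by
  have h_lower : α n ≤ αinf := ge_of_tendsto h <| eventually_atTop.2
    ⟨n, fun N hN => monotoneOn_alpha (mem_Ici.2 hn) (mem_Ici.2 (hn.trans hN)) hN⟩
  have h_tail : Tendsto (fun N : ℕ => α N + 1 / (2 * π * N)) atTop (𝓝 αinf) := by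
    have h0 : Tendsto (fun N : ℕ => 1 / (2 * π * N)) atTop (𝓝 0) :=
      tendsto_const_nhds.div_atTop (tendsto_natCast_atTop_atTop.const_mul_atTop (by positivity))
    simpa using h.add h0
  have h_upper : αinf ≤ α n + 1 / (2 * π * n) := le_of_tendsto h_tail <| eventually_atTop.2
    ⟨n, fun N hN => antitoneOn_alpha_add (mem_Ici.2 hn) (mem_Ici.2 (hn.trans hN)) hN⟩
  have h_const : 1 / (2 * π * n) ≤ 1 / (5 * n) := by
    gcongr
    linarith [pi_gt_three]
  constructor <;> linarith
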